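/- arXiv:1412.1470 — 2 statements merged into one kernel-verified Lean document; each statement's English description precedes it below -/
import Mathlib

section
/- Let OT' be an occurrence tree of a pattern P' in a database tree T, let x ∈ V(T) \ V(OT'), and let y be the rightmost vertex of OT' (last vertex in preorder). Then RExtend(OT', x, y) is an occurrence tree in T if and only if y.scope.l < x.scope.l and x.scope.u ≤ y.scope.u. -/
open scoped Classical

/-- A rooted tree on vertices `Fin (n+1)`, given by its parent function.
The preorder numbering is the identity (this is imposed by `IsValid`). -/
structure PTree (n : ℕ) where
  parent : Fin (n + 1) → Fin (n + 1)

namespace PTree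

variable {n : ℕ}

/-- `t.Anc u v` : `u` is a proper ancestor of `v`. -/
def Anc (t : PTree n) : Fin (n + 1) → Fin (n + 1) → Prop :=
  Relation.TransGen (fun a b => a = t.parent b ∧ a ≠ b)

/-- The set of descendants of `v`, including `v` itself (the subtree rooted at `v`). -/
noncomputable def descSet (t : PTree n) (v : Fin (n + 1)) : Finset (Fin (n + 1)) :=
  Finset.univ.filter fun w => w = v ∨ t.Anc v w

/-- The number of vertices in the subtree rooted at `v`. -/
noncomputable def size (t : PTree n) (v : Fin (n + 1)) : ℕ := (t.descSet v).card

/-- The preorder number of the rightmost (last in preorder) descendant of `v`. -/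
noncomputable def scopeU (t : PTree n) (v : Fin (n + 1)) : ℕ :=
  (t.descSet v).sup fun w => (w : ℕ)

/-- The scope of a vertex: lower bound is its preorder number, upper bound the
preorder number of its rightmost descendant. -/
noncomputable def scope (t : PTree n) (v : Fin (n + 1)) : ℕ × ℕ :=
  ((v : ℕ), t.scopeU v)

/-- `t` is a rooted tree whose preorder numbering is the identity:
vertex `0` is the root, parents come strictly earlier, and the parent of the
next vertex in preorder is the previous vertex or one of its ancestors. -/
def IsValid (t : PTree n) : Prop :=
  t.parent 0 = 0 ∧
  (∀ v : Fin (n + 1), v ≠ 0 → t.parent v < v) ∧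
  (∀ (v : Fin (n + 1)) (h : (v : ℕ) + 1 < n + 1),
    t.parent ⟨(v : ℕ) + 1, h⟩ = v ∨ t.Anc (t.parent ⟨(v : ℕ) + 1, h⟩) v)

/-- `v` lies on the rightmost path of `t` (the path from the root to the last
vertex in preorder). -/
def OnRMP (t : PTree n) (v : Fin (n + 1)) : Prop :=
  v = Fin.last n ∨ t.Anc v (Fin.last n)

/-- Rightmost path extension: attach a new vertex (the new last vertex in
preorder) as the rightmost child of `u`. -/
def extendP (t : PTree n) (u : Fin (n + 1)) : PTree (n + 1) where
  parent v := if h : (v : ℕ) < n + 1 then (t.parent ⟨(v : ℕ), h⟩).castSucc else u.castSucc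

end PTree

/-- A rooted ordered labeled tree. -/
structure LTree (n : ℕ) extends PTree n where
  label : Fin (n + 1) → ℕ

namespace LTree

variable {m n : ℕ}

def IsValid (t : LTree n) : Prop := t.toPTree.IsValid

/-- Subtree homeomorphism (embedding) of a pattern `P` into a database tree `T`:
injective, preorder-order preserving (preorder numbers being the identity),
label preserving, and mapping each edge to an ancestor-descendant pair. -/
def IsEmb (P : LTree m) (T : LTree n) (φ : Fin (m + 1) → Fin (n + 1)) : Prop :=
  StrictMono φ ∧ (∀ v, T.label (φ v) = P.label v) ∧
  (∀ v : Fin (m + 1), v ≠ 0 → T.toPTree.Anc (φ (P.parent v)) (φ v))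

/-- Rightmost path extension of a labeled tree: the new vertex gets label `a`. -/
def extendL (t : LTree m) (u : Fin (m + 1)) (a : ℕ) : LTree (m + 1) where
  toPTree := t.toPTree.extendP u
  label v := if h : (v : ℕ) < m + 1 then t.label ⟨(v : ℕ), h⟩ else a

end LTree

/-- Extension of an embedding: the new (last) pattern vertex is mapped to `x`. -/
def extendMap {m n : ℕ} (φ : Fin (m + 1) → Fin (n + 1)) (x : Fin (n + 1)) :
    Fin (m + 2) → Fin (n + 1) :=
  fun v => if h : (v : ℕ) < m + 1 then φ ⟨(v : ℕ), h⟩ else x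

/-- `RExtend(OT', x, y)` (with `y = φ' u`) is an occurrence tree in `T`, i.e. the
extended map is an embedding of the rightmost path extension of `P'` (whose new
vertex carries the label of `x`). -/
def ExtIsOccTree {m n : ℕ} (P' : LTree m) (T : LTree n)
    (φ' : Fin (m + 1) → Fin (n + 1)) (u : Fin (m + 1)) (x : Fin (n + 1)) : Prop :=
  LTree.IsEmb (P'.extendL u (T.label x)) T (extendMap φ' x)

/-!
In a tree numbered in preorder, the descendants of a vertex `a` form the interval
`[a, scopeU a]`: walking back from a descendant `d` one preorder step at a time, the parent of
each vertex is an ancestor-or-self of its predecessor, so we never leave the subtree of `a`.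
Hence `a` is a proper ancestor of `b` iff `a < b` and `scopeU b ≤ scopeU a`. On the other hand,
extending an embedding whose last vertex goes to `y` by a new rightmost vertex mapped to `x`
keeps it an embedding iff the map stays increasing, i.e. `y < x`, and the new pattern edge goes
to an ancestor–descendant pair, i.e. `y` is an ancestor of `x`.
-/

namespace PTree

variable {n : ℕ} {t : PTree n}

lemma mem_descSet {v w : Fin (n + 1)} : w ∈ t.descSet v ↔ w = v ∨ t.Anc v w := by
  simp [descSet]

lemma self_mem_descSet (t : PTree n) (v : Fin (n + 1)) : v ∈ t.descSet v :=
  mem_descSet.2 (Or.inl rfl)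

lemma descSet_subset_of_mem {u v : Fin (n + 1)} (h : u ∈ t.descSet v) :
    t.descSet u ⊆ t.descSet v := by
  intro w hw
  rcases mem_descSet.1 h with rfl | hvu
  · exact hw
  · rcases mem_descSet.1 hw with rfl | huw
    exacts [mem_descSet.2 (Or.inr hvu), mem_descSet.2 (Or.inr (hvu.trans huw))]

lemma parent_mem_descSet_of_anc {v d : Fin (n + 1)} (h : t.Anc v d) :
    t.parent d ∈ t.descSet v := by
  rcases Relation.TransGen.tail'_iff.1 h with ⟨b, hvb, hbd, -⟩
  rcases Relation.reflTransGen_iff_eq_or_transGen.1 hvb with rfl | hvb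
  exacts [hbd ▸ t.self_mem_descSet b, hbd ▸ mem_descSet.2 (Or.inr hvb)]

lemma le_scopeU (t : PTree n) (v : Fin (n + 1)) : (v : ℕ) ≤ t.scopeU v :=
  Finset.le_sup (t.self_mem_descSet v)

lemma scopeU_le_of_anc {a b : Fin (n + 1)} (h : t.Anc a b) : t.scopeU b ≤ t.scopeU a :=
  Finset.sup_mono (descSet_subset_of_mem (mem_descSet.2 (Or.inr h)))

namespace IsValid

lemma lt_of_eq_parent (ht : t.IsValid) {a b : Fin (n + 1)} (h : a = t.parent b) (hne : a ≠ b) :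
    a < b := by
  rcases eq_or_ne b 0 with rfl | hb
  · exact absurd (h.trans ht.1) hne
  · exact h ▸ ht.2.1 b hb

lemma lt_of_anc (ht : t.IsValid) {a b : Fin (n + 1)} (h : t.Anc a b) : a < b := by
  induction h with
  | single h => exact ht.lt_of_eq_parent h.1 h.2
  | tail _ h ih => exact ih.trans (ht.lt_of_eq_parent h.1 h.2)

lemma castSucc_mem_descSet_parent_succ (ht : t.IsValid) (i : Fin n) :
    i.castSucc ∈ t.descSet (t.parent i.succ) :=
  mem_descSet.2 ((ht.2.2 i.castSucc (by simp)).imp Eq.symm id)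

lemma mem_descSet_of_le_of_le (ht : t.IsValid) {v w d : Fin (n + 1)} (hd : d ∈ t.descSet v)
    (hvw : v ≤ w) (hwd : w ≤ d) : w ∈ t.descSet v := by
  induction d using Fin.induction with
  | zero =>
    obtain rfl := Fin.le_zero_iff.1 hwd
    obtain rfl := Fin.le_zero_iff.1 hvw
    exact t.self_mem_descSet 0
  | succ i ih =>
    rcases hwd.lt_or_eq with hwd | rfl
    · have hv : t.Anc v i.succ := (mem_descSet.1 hd).resolve_left (hvw.trans_lt hwd).ne'
      exact ih (descSet_subset_of_mem (parent_mem_descSet_of_anc hv)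
        (ht.castSucc_mem_descSet_parent_succ i)) (Fin.le_castSucc_iff.2 hwd)
    · exact hd

lemma anc_of_lt_of_le_scopeU (ht : t.IsValid) {a b : Fin (n + 1)} (hab : a < b)
    (hb : (b : ℕ) ≤ t.scopeU a) : t.Anc a b := by
  obtain ⟨d, hd, hsup⟩ := Finset.exists_mem_eq_sup (t.descSet a) ⟨a, t.self_mem_descSet a⟩
    (fun w => (w : ℕ))
  have hbd : b ≤ d := Fin.le_def.2 (hb.trans_eq hsup)
  exact (mem_descSet.1 (ht.mem_descSet_of_le_of_le hd hab.le hbd)).resolve_left hab.ne'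

lemma anc_iff_lt_and_scopeU_le (ht : t.IsValid) {a b : Fin (n + 1)} :
    t.Anc a b ↔ a < b ∧ t.scopeU b ≤ t.scopeU a :=
  ⟨fun h => ⟨ht.lt_of_anc h, scopeU_le_of_anc h⟩,
    fun ⟨hab, hscope⟩ => ht.anc_of_lt_of_le_scopeU hab ((t.le_scopeU b).trans hscope)⟩

end IsValid

end PTree

lemma extendMap_eq_snoc {m n : ℕ} (φ : Fin (m + 1) → Fin (n + 1)) (x : Fin (n + 1)) :
    extendMap φ x = Fin.snoc φ x := by
  funext i
  induction i using Fin.lastCases <;> simp [extendMap, Fin.is_le]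

lemma PTree.extendP_parent {n : ℕ} (t : PTree n) (u : Fin (n + 1)) :
    (t.extendP u).parent = Fin.snoc (Fin.castSucc ∘ t.parent) u.castSucc := by
  funext i
  induction i using Fin.lastCases <;> simp [extendP, Fin.is_le]

namespace LTree

variable {m n : ℕ}

lemma extendL_parent (t : LTree m) (u : Fin (m + 1)) (a : ℕ) :
    (t.extendL u a).parent = Fin.snoc (Fin.castSucc ∘ t.parent) u.castSucc :=
  t.toPTree.extendP_parent u

lemma extendL_label (t : LTree m) (u : Fin (m + 1)) (a : ℕ) :
    (t.extendL u a).label = Fin.snoc t.label a := by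
  funext i
  induction i using Fin.lastCases <;> simp [extendL, Fin.is_le]

lemma isEmb_extendL_iff {P : LTree m} {T : LTree n} {φ : Fin (m + 1) → Fin (n + 1)}
    (hφ : IsEmb P T φ) (u : Fin (m + 1)) (x : Fin (n + 1)) :
    IsEmb (P.extendL u (T.label x)) T (extendMap φ x) ↔
      φ (Fin.last m) < x ∧ T.Anc (φ u) x := by
  rw [IsEmb, extendMap_eq_snoc, extendL_label, extendL_parent]
  constructor
  · rintro ⟨hmono, -, hanc⟩
    exact ⟨by simpa using hmono (Fin.castSucc_lt_last (Fin.last m)),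
      by simpa using hanc (Fin.last _) (Fin.last_pos.ne')⟩
  · rintro ⟨hlt, hanc⟩
    refine ⟨?_, ?_, ?_⟩
    · rw [← Fin.insertNth_last']
      exact Fin.strictMono_insertNth_last hφ.1 x hlt
    · rw [Fin.forall_fin_succ']
      simpa using hφ.2.1
    · rw [Fin.forall_fin_succ']
      exact ⟨fun i hi => by simpa using hφ.2.2 i (Fin.castSucc_ne_zero_iff.1 hi),
        fun _ => by simpa using hanc⟩

end LTree

theorem stmt8_general {m n : ℕ} (P' : LTree m) (T : LTree n) (hT : T.IsValid)
    (φ' : Fin (m + 1) → Fin (n + 1)) (hφ : LTree.IsEmb P' T φ')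
    (x : Fin (n + 1)) :
    ExtIsOccTree P' T φ' (Fin.last m) x ↔
      ((φ' (Fin.last m) : ℕ) < (x : ℕ) ∧
        T.toPTree.scopeU x ≤ T.toPTree.scopeU (φ' (Fin.last m))) := by
  rw [ExtIsOccTree, LTree.isEmb_extendL_iff hφ, PTree.IsValid.anc_iff_lt_and_scopeU_le hT,
    Fin.lt_def]
  exact ⟨fun h => h.2, fun h => ⟨h.1, h⟩⟩

/-- Proposition 4: let `OT'` be the occurrence tree of an embedding `φ'` of `P'`
into `T`, `x ∈ V(T) \ V(OT')`, and `y = φ'(last)` the rightmost vertex of `OT'`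
(last in preorder). Then `RExtend(OT', x, y)` is an occurrence tree in `T` iff
`y.scope.l < x.scope.l` and `x.scope.u ≤ y.scope.u`. -/
theorem stmt8 {m n : ℕ} (P' : LTree m) (T : LTree n) (hP : P'.IsValid) (hT : T.IsValid)
    (φ' : Fin (m + 1) → Fin (n + 1)) (hφ : LTree.IsEmb P' T φ')
    (x : Fin (n + 1)) (hx : x ∉ Set.range φ') :
    ExtIsOccTree P' T φ' (Fin.last m) x ↔
      ((φ' (Fin.last m) : ℕ) < (x : ℕ) ∧
        T.toPTree.scopeU x ≤ T.toPTree.scopeU (φ' (Fin.last m))) :=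
  stmt8_general P' T hT φ' hφ x
end

section
/- Per-occurrence support of tree patterns is not anti-monotone: there exist a database tree T, a minimum support threshold (namely 2), and rooted ordered labeled tree patterns P1, P2 with P1 a subtree of P2 (P2 a rightmost path extension of P1), such that the number of subtree-homeomorphic embeddings of P2 into T is at least 2 while the number of embeddings of P1 into T is less than 2. -/
open scoped Classical

/-! In a star whose root is labelled `a` and whose `n` leaves are labelled `b ≠ a`, the one-vertex
pattern `a` occurs exactly once, while its rightmost path extension `a — b` occurs once per leaf. -/

namespace PTree

variable {n : ℕ}

theorem anc_of_parent_eq {t : PTree n} {u v : Fin (n + 1)} (h : t.parent v = u) (hne : u ≠ v) :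
    t.Anc u v :=
  .single ⟨h.symm, hne⟩

theorem isValid_of_zero (t : PTree 0) : t.IsValid :=
  ⟨Fin.eq_zero _, fun v hv => absurd (Fin.eq_zero v) hv, fun v h => absurd h (by omega)⟩

theorem onRMP_of_zero (t : PTree 0) (u : Fin 1) : t.OnRMP u :=
  Or.inl (Fin.eq_zero u)

def star (n : ℕ) : PTree n where
  parent _ := 0

theorem star_anc_zero {v : Fin (n + 1)} (hv : v ≠ 0) : (star n).Anc 0 v :=
  anc_of_parent_eq rfl (Ne.symm hv)

theorem star_isValid : (star n).IsValid := by
  refine ⟨rfl, fun v hv => Fin.pos_of_ne_zero hv, fun v _ => ?_⟩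
  rcases eq_or_ne v 0 with rfl | hv
  · exact Or.inl rfl
  · exact Or.inr (star_anc_zero hv)

end PTree

section extendMap

variable {m n : ℕ}

theorem extendMap_last (φ : Fin (m + 1) → Fin (n + 1)) (x : Fin (n + 1)) :
    extendMap φ x (Fin.last (m + 1)) = x := by
  simp [extendMap]

theorem extendMap_injective (φ : Fin (m + 1) → Fin (n + 1)) :
    Function.Injective (extendMap φ) := fun x y h => by
  simpa only [extendMap_last] using congrFun h (Fin.last (m + 1))

end extendMap

namespace LTree

variable {n : ℕ}

def single (a : ℕ) : LTree 0 where
  parent _ := 0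
  label _ := a

def star (n a b : ℕ) : LTree n where
  toPTree := PTree.star n
  label v := if v = 0 then a else b

theorem star_label_of_ne_zero {a b : ℕ} {x : Fin (n + 1)} (hx : x ≠ 0) :
    (star n a b).label x = b :=
  if_neg hx

theorem star_label_eq_iff {a b : ℕ} (hab : a ≠ b) {x : Fin (n + 1)} :
    (star n a b).label x = a ↔ x = 0 := by
  by_cases hx : x = 0 <;> simp [star, hx, Ne.symm hab]

theorem isEmb_of_zero_iff (P : LTree 0) (T : LTree n) (φ : Fin 1 → Fin (n + 1)) :
    P.IsEmb T φ ↔ T.label (φ 0) = P.label 0 := by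
  refine ⟨fun h => h.2.1 0, fun h => ⟨Fin.strictMono_iff_lt_succ.2 finZeroElim, fun v => ?_,
    fun v hv => absurd (Fin.eq_zero v) hv⟩⟩
  rwa [Fin.eq_zero v]

theorem card_isEmb_of_zero (P : LTree 0) (T : LTree n) :
    Nat.card {φ // P.IsEmb T φ} = Nat.card {x // T.label x = P.label 0} :=
  Nat.card_congr <| (Equiv.funUnique (Fin 1) (Fin (n + 1))).subtypeEquiv (isEmb_of_zero_iff P T)

theorem isEmb_extendL_zero (P : LTree 0) (T : LTree n) {r x : Fin (n + 1)} {b : ℕ}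
    (hrx : r < x) (hr : T.label r = P.label 0) (hx : T.label x = b) (hanc : T.Anc r x) :
    (P.extendL 0 b).IsEmb T (extendMap (fun _ => r) x) := by
  refine ⟨Fin.strictMono_iff_lt_succ.2 fun i => ?_, fun v => ?_, fun v hv => ?_⟩
  · fin_cases i
    simpa [extendMap] using hrx
  · fin_cases v
    · simpa [extendMap, extendL] using hr
    · simpa [extendMap, extendL] using hx
  · fin_cases v
    · exact absurd rfl hv
    · simpa [extendMap, extendL, PTree.extendP] using hanc

theorem card_isEmb_single_star {a b : ℕ} (hab : a ≠ b) :
    Nat.card {φ // (single a).IsEmb (star n a b) φ} = 1 := by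
  rw [card_isEmb_of_zero]
  exact Nat.card_eq_one_iff_exists.2
    ⟨⟨0, rfl⟩, fun y => Subtype.ext ((star_label_eq_iff hab).1 y.2)⟩

theorem le_card_isEmb_extendL_single_star (a b : ℕ) :
    n ≤ Nat.card {φ // ((single a).extendL 0 b).IsEmb (star n a b) φ} := by
  have emb (i : Fin n) :
      ((single a).extendL 0 b).IsEmb (star n a b) (extendMap (fun _ => 0) i.succ) :=
    isEmb_extendL_zero _ _ (Fin.succ_pos i) rfl (star_label_of_ne_zero (Fin.succ_ne_zero i))
      (PTree.star_anc_zero (Fin.succ_ne_zero i))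
  simpa using Nat.card_le_card_of_injective (fun i => ⟨_, emb i⟩) fun i j h =>
    Fin.succ_injective _ (extendMap_injective (fun _ => 0) (congrArg Subtype.val h))

end LTree

/-- Per-occurrence support is not anti-monotone: there are a database tree `T`, a
threshold `2`, and patterns `P1`, `P2` with `P2` a rightmost path extension of
`P1`, such that `P2` has at least `2` subtree-homeomorphic embeddings into `T`
while `P1` has fewer than `2`. -/
theorem stmt12 :
    ∃ (n m : ℕ) (T : LTree n) (P1 : LTree m) (u : Fin (m + 1)) (a : ℕ),
      T.IsValid ∧ P1.IsValid ∧ P1.toPTree.OnRMP u ∧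
      2 ≤ Nat.card {φ : Fin (m + 2) → Fin (n + 1) //
            LTree.IsEmb (P1.extendL u a) T φ} ∧
      Nat.card {φ : Fin (m + 1) → Fin (n + 1) // LTree.IsEmb P1 T φ} < 2 := by
  refine ⟨2, 0, LTree.star 2 1 2, LTree.single 1, 0, 2, PTree.star_isValid,
    PTree.isValid_of_zero _, PTree.onRMP_of_zero _ 0,
    LTree.le_card_isEmb_extendL_single_star 1 2, ?_⟩
  rw [LTree.card_isEmb_single_star (by norm_num)]
  norm_num
end
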